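/- For every H ∈ (0,1) and every t > 0, the iterated integral ∫_0^t ∫_ℝ e^{−2(t−s)ξ²} |ξ|^{1−2H} dξ ds equals (Γ(1−H)/(2^{1−H} H)) · t^H, where Γ denotes the Gamma function. -/
import Mathlib

open MeasureTheory

lemma inner_gauss (H b : ℝ) (hH0 : 0 < H) (hH1 : H < 1) (hb : 0 < b) :
    (∫ ξ : ℝ, Real.exp (-b * ξ ^ 2) * |ξ| ^ (1 - 2 * H)) =
      b ^ (H - 1) * Real.Gamma (1 - H) := by
  have key := integral_rpow_mul_exp_neg_mul_rpow (p := 2) (q := 1 - 2 * H) (b := b)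
    two_pos (by linarith) hb
  have h1 : (∫ ξ : ℝ, Real.exp (-b * ξ ^ 2) * |ξ| ^ (1 - 2 * H)) =
      ∫ ξ : ℝ, (fun x => x ^ (1 - 2 * H) * Real.exp (-b * x ^ (2 : ℝ))) |ξ| := by
    congr 1; ext ξ
    rw [mul_comm]
    congr 2
    rw [show ((2 : ℝ)) = ((2 : ℕ) : ℝ) by norm_num, Real.rpow_natCast, sq_abs]
  rw [h1, _root_.integral_comp_abs (f := fun x => x ^ (1 - 2 * H) * Real.exp (-b * x ^ (2 : ℝ))), key,
    show (1 - 2 * H + 1) / 2 = 1 - H by ring, show -(1 - 2 * H + 1) / 2 = H - 1 by ring]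
  ring

/-- For every `H ∈ (0,1)` and `t > 0`:
`∫_0^t ∫_ℝ e^{−2(t−s)ξ²} |ξ|^{1−2H} dξ ds = (Γ(1−H)/(2^{1−H} H)) t^H`. -/
theorem stmt7 (H t : ℝ) (hH0 : 0 < H) (hH1 : H < 1) (ht : 0 < t) :
    (∫ s in Set.Ioo (0 : ℝ) t, ∫ ξ : ℝ,
        Real.exp (-2 * (t - s) * ξ ^ 2) * |ξ| ^ (1 - 2 * H)) =
      (Real.Gamma (1 - H) / ((2 : ℝ) ^ (1 - H) * H)) * t ^ H := by
  have h1 : (∫ s in Set.Ioo (0 : ℝ) t, ∫ ξ : ℝ,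
        Real.exp (-2 * (t - s) * ξ ^ 2) * |ξ| ^ (1 - 2 * H)) =
      ∫ s in Set.Ioo (0 : ℝ) t,
        (2 : ℝ) ^ (H - 1) * Real.Gamma (1 - H) * (t - s) ^ (H - 1) := by
    refine setIntegral_congr_fun measurableSet_Ioo (fun s hs => ?_)
    have hb : 0 < 2 * (t - s) := by
      have := hs.2; nlinarith
    have : (∫ ξ : ℝ, Real.exp (-2 * (t - s) * ξ ^ 2) * |ξ| ^ (1 - 2 * H)) =
        ∫ ξ : ℝ, Real.exp (-(2 * (t - s)) * ξ ^ 2) * |ξ| ^ (1 - 2 * H) := by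
      congr 1; ext ξ; ring_nf
    rw [this, inner_gauss H _ hH0 hH1 hb,
      Real.mul_rpow (by norm_num) (by have := hs.2; linarith)]
    ring
  rw [h1, MeasureTheory.integral_const_mul]
  have h2 : (∫ s in Set.Ioo (0 : ℝ) t, (t - s) ^ (H - 1)) = t ^ H / H := by
    rw [← MeasureTheory.integral_Ioc_eq_integral_Ioo,
      ← intervalIntegral.integral_of_le ht.le,
      intervalIntegral.integral_comp_sub_left (fun u => u ^ (H - 1)) t]
    simp only [sub_zero, sub_self]
    rw [integral_rpow (Or.inl (by linarith))]
    rw [show H - 1 + 1 = H by ring, Real.zero_rpow hH0.ne']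
    ring
  rw [h2]
  have h3 : (2 : ℝ) ^ (H - 1) = ((2 : ℝ) ^ (1 - H))⁻¹ := by
    rw [← Real.rpow_neg (by norm_num), neg_sub]
  rw [h3]
  have h4 : (2 : ℝ) ^ (1 - H) ≠ 0 := by positivity
  field_simp
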